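/- arXiv:2001.01778 — 3 statements merged into one kernel-verified Lean document; each statement's English description precedes it below -/
import Mathlib

section
/- For integers satisfying 2 ≤ r₁ ≤ r₂ ≤ ⋯ ≤ r_δ < k, δ ≥ 1, θ an integer with 0 ≤ θ ≤ δ - 2, and X = r₁ + ⋯ + r_δ, Y = r₁ + ⋯ + r_{θ+1}, one has (1+X)(1+θ) - 1 - Y·δ ≥ θ. -/
/-!
After expanding, the claim is `δ Y ≤ (θ + 1) X`: the mean of the `θ + 1` smallest `rᵢ` is at most
the mean of all `δ` of them. This is Chebyshev's sum inequality for the increasing sequence `r`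
and the decreasing indicator of the first `θ + 1` indices.
-/

open Finset

theorem MonotoneOn.mul_sum_Icc_le_mul_sum_Icc {R : Type*} [CommRing R] [LinearOrder R]
    [IsStrictOrderedRing R] {r : ℕ → R} {m n : ℕ} (hr : MonotoneOn r (Set.Icc 1 n))
    (hmn : m ≤ n) :
    (n : R) * ∑ i ∈ Icc 1 m, r i ≤ m * ∑ i ∈ Icc 1 n, r i := by
  set f : ℕ → R := fun i ↦ if i ≤ m then 1 else 0
  have hf : Antitone f := fun i j hij ↦ by
    by_cases hj : j ≤ m
    · simp [f, hj, hij.trans hj]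
    · simp only [f, hj, if_false]; split_ifs <;> norm_num
  have hprefix : (Icc 1 n).filter (· ≤ m) = Icc 1 m := by
    ext i; simp only [mem_filter, mem_Icc]; omega
  have key := ((hf.antitoneOn _).antivaryOn (s := (Icc 1 n : Set ℕ))
    (by simpa using hr)).card_mul_sum_le_sum_mul_sum
  simpa [f, ite_mul, sum_ite, hprefix] using key

theorem stmt_0_general (δ θ : ℕ) (r : ℕ → ℤ)
    (hmono : ∀ i j, 1 ≤ i → i ≤ j → j ≤ δ → r i ≤ r j)
    (hθ : θ + 2 ≤ δ)
    (X Y : ℤ)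
    (hX : X = ∑ i ∈ Finset.Icc 1 δ, r i)
    (hY : Y = ∑ i ∈ Finset.Icc 1 (θ + 1), r i) :
    (1 + X) * (1 + (θ : ℤ)) - 1 - Y * δ ≥ (θ : ℤ) := by
  have hr : MonotoneOn r (Set.Icc 1 δ) := fun i hi j hj hij ↦ hmono i j hi.1 hij hj.2
  have key := hr.mul_sum_Icc_le_mul_sum_Icc (m := θ + 1) (by omega)
  rw [← hX, ← hY] at key
  push_cast at key
  linarith

theorem stmt_0 (δ k θ : ℕ) (r : ℕ → ℤ)
    (hδ : 1 ≤ δ)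
    (hr2 : ∀ i, 1 ≤ i → i ≤ δ → 2 ≤ r i)
    (hmono : ∀ i j, 1 ≤ i → i ≤ j → j ≤ δ → r i ≤ r j)
    (hrk : ∀ i, 1 ≤ i → i ≤ δ → r i < k)
    (hθ : θ + 2 ≤ δ)
    (X Y : ℤ)
    (hX : X = ∑ i ∈ Finset.Icc 1 δ, r i)
    (hY : Y = ∑ i ∈ Finset.Icc 1 (θ + 1), r i) :
    (1 + X) * (1 + (θ : ℤ)) - 1 - Y * δ ≥ (θ : ℤ) :=
  stmt_0_general δ θ r hmono hθ X Y hX hY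
end

section
/- Let q be an odd prime power and ℓ ≥ 1 odd. The number of points (x,y) ∈ 𝔽_{q^{2ℓ}}² with y^{q^ℓ+1} = x^q + x and y ≠ 0 equals q^{2ℓ+1} - q. -/
/-!
Let `T x = x ^ q + x`, an additive map. Its kernel is `{0}` together with the solutions of
`x ^ (q - 1) = -1`; since `2 (q - 1) ∣ q ^ (2ℓ) - 1`, a primitive `2 (q - 1)`-th root of unity
solves this, so the kernel has exactly `q` elements. For `y ≠ 0` the norm `y ^ (q ^ ℓ + 1)` lies
in the subfield `E` fixed by `x ↦ x ^ q ^ ℓ`. `T` maps `E` into itself, injectively because an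
element `d` of `ker T ∩ E` satisfies `d = d ^ q ^ ℓ = (-1) ^ ℓ d = -d`, hence onto `E`. So each
of the `q ^ (2ℓ) - 1` nonzero `y` contributes a full coset of `ker T`.
-/

open Set

theorem FiniteField.exists_isPrimitiveRoot_of_dvd {K : Type*} [Field K] [Finite K] {d : ℕ}
    (hd : d ∣ Nat.card K - 1) : ∃ ζ : K, IsPrimitiveRoot ζ d := by
  obtain ⟨g, hg⟩ := IsCyclic.exists_ofOrder_eq_natCard (α := Kˣ)
  rw [Nat.card_units] at hg
  refine ⟨(g : K) ^ ((Nat.card K - 1) / d), ?_⟩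
  rw [IsPrimitiveRoot.iff_orderOf, ← Units.val_pow_eq_pow_val, orderOf_units, ← hg,
    orderOf_pow_orderOf_div (hg ▸ Nat.sub_ne_zero_of_lt Finite.one_lt_card) (hg ▸ hd)]

theorem Nat.two_mul_sub_one_dvd_pow_two_mul_sub_one {q : ℕ} (hq : Odd q) (ℓ : ℕ) :
    2 * (q - 1) ∣ q ^ (2 * ℓ) - 1 := by
  obtain ⟨t, rfl⟩ := hq
  have hsq : 2 * (2 * t + 1 - 1) ∣ (2 * t + 1) ^ 2 - 1 :=
    ⟨t + 1, by rw [show (2 * t + 1) ^ 2 = 2 * (2 * t) * (t + 1) + 1 by ring]; simp⟩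
  rw [pow_mul]
  simpa only [one_pow] using hsq.trans (Nat.sub_dvd_pow_sub_pow _ 1 ℓ)

theorem FiniteField.ncard_setOf_pow_add_self_eq_zero {K : Type*} [Field K] [Finite K] {q : ℕ}
    (hq : 1 < q) (hdvd : 2 * (q - 1) ∣ Nat.card K - 1) :
    {x : K | x ^ q + x = 0}.ncard = q := by
  classical
  obtain ⟨ζ, hζ⟩ := exists_isPrimitiveRoot_of_dvd hdvd
  have hζneg : ζ ^ (q - 1) = -1 := (hζ.pow (by omega) (mul_comm _ _)).eq_neg_one_of_two_right
  have hprim : IsPrimitiveRoot (ζ ^ 2) (q - 1) := hζ.pow (by omega) rfl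
  have hset : {x : K | x ^ q + x = 0} =
      insert 0 (Polynomial.nthRootsFinset (q - 1) (-1 : K) : Set K) := by
    ext x
    have hfactor : x ^ q + x = (x ^ (q - 1) + 1) * x := by
      rw [add_one_mul, ← pow_succ, Nat.sub_add_cancel hq.le]
    rw [mem_ofPred_eq, hfactor, mul_eq_zero, add_eq_zero_iff_eq_neg, mem_insert_iff,
      Finset.mem_coe, Polynomial.mem_nthRootsFinset (by omega), or_comm]
  have hzero : (0 : K) ∉ Polynomial.nthRootsFinset (q - 1) (-1 : K) := by
    simp [Polynomial.mem_nthRootsFinset (by omega : 0 < q - 1), zero_pow (by omega : q - 1 ≠ 0)]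
  rw [hset, ncard_insert_of_notMem (by exact_mod_cast hzero), ncard_coe_finset,
    Polynomial.nthRootsFinset_def,
    Multiset.toFinset_card_of_nodup (hprim.nthRoots_nodup (neg_ne_zero.mpr one_ne_zero)),
    hprim.card_nthRoots, if_pos ⟨ζ, hζneg⟩]
  omega

theorem pow_pow_eq_neg_one_pow_mul {R : Type*} [CommRing R] {q : ℕ} (hq : Odd q) {d : R}
    (hd : d ^ q = -d) (i : ℕ) : d ^ q ^ i = (-1) ^ i * d := by
  induction i with
  | zero => simp
  | succ i ih =>
    rw [pow_succ, pow_mul, ih, mul_pow, hd, ← pow_mul, mul_comm i q, pow_mul, hq.neg_one_pow]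
    ring

theorem eq_zero_of_pow_add_self_eq_zero_of_pow_pow_eq_self {R : Type*} [CommRing R]
    [NoZeroDivisors R] (h2 : (2 : R) ≠ 0) {q ℓ : ℕ} (hq : Odd q) (hℓ : Odd ℓ) {d : R}
    (hd : d ^ q + d = 0) (hdℓ : d ^ q ^ ℓ = d) : d = 0 := by
  have h : d = -d := by
    conv_lhs => rw [← hdℓ, pow_pow_eq_neg_one_pow_mul hq (eq_neg_of_add_eq_zero_left hd),
      hℓ.neg_one_pow, neg_one_mul]
  have h2d : 2 * d = 0 := by linear_combination h
  exact (mul_eq_zero.mp h2d).resolve_left h2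

def iterateFrobeniusAddId (R : Type*) [CommSemiring R] (p m : ℕ) [ExpChar R p] : R →+ R :=
  (iterateFrobenius R p m : R →+ R) + AddMonoidHom.id R

@[simp]
theorem iterateFrobeniusAddId_apply {R : Type*} [CommSemiring R] (p m : ℕ) [ExpChar R p]
    (x : R) : iterateFrobeniusAddId R p m x = x ^ p ^ m + x := rfl

theorem mem_range_iterateFrobeniusAddId {K : Type*} [Field K] [Finite K] {p m ℓ : ℕ}
    [ExpChar K p] (h2 : (2 : K) ≠ 0) (hq : Odd (p ^ m)) (hℓ : Odd ℓ) {c : K}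
    (hc : c ^ (p ^ m) ^ ℓ = c) : c ∈ range (iterateFrobeniusAddId K p m) := by
  set T := iterateFrobeniusAddId K p m
  set E := {x : K | x ^ (p ^ m) ^ ℓ = x}
  have hfrob_add (x y : K) : (x + y) ^ (p ^ m) ^ ℓ = x ^ (p ^ m) ^ ℓ + y ^ (p ^ m) ^ ℓ := by
    rw [← pow_mul, add_pow_expChar_pow]
  have hmaps : MapsTo T E E := fun x (hx : _ = x) => by
    change (x ^ p ^ m + x) ^ (p ^ m) ^ ℓ = x ^ p ^ m + x
    rw [hfrob_add, pow_right_comm, hx]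
  have hinj : InjOn T E := fun x (hx : _ = x) y (hy : _ = y) hxy => by
    refine sub_eq_zero.mp (eq_zero_of_pow_add_self_eq_zero_of_pow_pow_eq_self h2 hq hℓ ?_ ?_)
    · rw [← iterateFrobeniusAddId_apply, map_sub, hxy, sub_self]
    · rw [← pow_mul, sub_pow_expChar_pow, pow_mul, hx, hy]
  obtain ⟨x, -, hx⟩ := ((toFinite E).injOn_iff_bijOn_of_mapsTo hmaps |>.mp hinj).surjOn hc
  exact ⟨x, hx⟩

theorem FiniteField.pow_add_one_pow_eq {K : Type*} [Field K] [Finite K] {n : ℕ}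
    (hK : Nat.card K = n ^ 2) (y : K) : (y ^ (n + 1)) ^ n = y ^ (n + 1) := by
  have : Fintype K := Fintype.ofFinite K
  rw [← pow_mul, add_one_mul, ← sq, pow_add, ← hK, Nat.card_eq_fintype_card,
    FiniteField.pow_card, pow_succ']

theorem ncard_setOf_eq_apply_and {G H B : Type*} [AddGroup G] [AddGroup H] (f : G →+ H)
    (N : B → H) (P : B → Prop) (hN : ∀ y, P y → N y ∈ range f) :
    {z : G × B | N z.2 = f z.1 ∧ P z.2}.ncard = Nat.card {y // P y} * Nat.card f.ker := by
  choose s hs using hN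
  rw [← Nat.card_coe_set_eq, ← Nat.card_prod]
  refine Nat.card_congr
    { toFun z := (⟨z.1.2, z.2.2⟩, ⟨z.1.1 - s _ z.2.2, by simp [hs, z.2.1]⟩)
      invFun w := ⟨(w.2 + s _ w.1.2, w.1), by simp [hs, AddMonoidHom.mem_ker.mp w.2.2, w.1.2]⟩
      left_inv z := by simp
      right_inv w := by simp }

theorem stmt_12_general (q ℓ : ℕ) (hq : ∃ (p m : ℕ), p.Prime ∧ 0 < m ∧ q = p ^ m)
    (hqodd : Odd q) (hℓodd : Odd ℓ)
    (F : Type*) [Field F] [Fintype F] (hF : Fintype.card F = q ^ (2 * ℓ)) :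
    {p : F × F | p.2 ^ (q ^ ℓ + 1) = p.1 ^ q + p.1 ∧ p.2 ≠ 0}.ncard
      = q ^ (2 * ℓ + 1) - q := by
  obtain ⟨p, m, hp, hm, rfl⟩ := hq
  have : Fact p.Prime := ⟨hp⟩
  have : CharP F p := charP_of_card_eq_prime_pow (by rw [hF, ← pow_mul])
  have hcard : Nat.card F = (p ^ m) ^ (2 * ℓ) := Nat.card_eq_fintype_card.trans hF
  have h2 : (2 : F) ≠ 0 := Ring.two_ne_zero fun h ↦ by
    have := FiniteField.even_card_iff_char_two.mp h
    rw [hF, Nat.odd_iff.mp (hqodd.pow)] at this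
    exact one_ne_zero this
  set T := iterateFrobeniusAddId F p m
  have hker : Nat.card T.ker = p ^ m := by
    have hdvd := hcard ▸ Nat.two_mul_sub_one_dvd_pow_two_mul_sub_one hqodd ℓ
    rw [← SetLike.coe_sort_coe, Nat.card_coe_set_eq,
      ← FiniteField.ncard_setOf_pow_add_self_eq_zero (Nat.one_lt_pow hm.ne' hp.one_lt) hdvd]
    rfl
  have hnorm (y : F) (_ : y ≠ 0) : y ^ ((p ^ m) ^ ℓ + 1) ∈ range T :=
    mem_range_iterateFrobeniusAddId h2 hqodd hℓodd
      (FiniteField.pow_add_one_pow_eq (by rw [hcard]; ring) y)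
  calc _ = {z : F × F | z.2 ^ ((p ^ m) ^ ℓ + 1) = T z.1 ∧ z.2 ≠ 0}.ncard := rfl
    _ = Nat.card {y : F // y ≠ 0} * Nat.card T.ker := ncard_setOf_eq_apply_and T _ _ hnorm
    _ = _ := by
      rw [← Nat.card_congr unitsEquivNeZero, Nat.card_units, hker, hcard, Nat.sub_mul, one_mul,
        pow_succ]

theorem stmt_12 (q ℓ : ℕ) (hq : ∃ (p m : ℕ), p.Prime ∧ 0 < m ∧ q = p ^ m)
    (hqodd : Odd q) (hℓ : 1 ≤ ℓ) (hℓodd : Odd ℓ)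
    (F : Type*) [Field F] [Fintype F] (hF : Fintype.card F = q ^ (2 * ℓ)) :
    {p : F × F | p.2 ^ (q ^ ℓ + 1) = p.1 ^ q + p.1 ∧ p.2 ≠ 0}.ncard
      = q ^ (2 * ℓ + 1) - q :=
  stmt_12_general q ℓ hq hqodd hℓodd F hF
end

section
/- Let q be a prime power. The number of affine 𝔽_{q⁶}-rational points (x,y,z) on the Giulietti–Korchmáros curve {z^{q²-q+1} = y^{q²} - y, y^{q+1} = x^q + x} with z ≠ 0 equals q⁸ - q⁶ + q⁵ - q³ = q³(q²-1)(q³+1). -/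
/-!
Fibre the curve over `y` and put `w = y^{q²} - y`, `v = w^{q²-1}`. A point over `y` exists iff
`w ≠ 0` and `altTrace q (y^{q+1}) = 0`, and an identity in `y` turns this into
`v^{q+1} + v^q + 1 = 0`. Then there are `q` choices of `x` (a coset of the kernel of
`x ↦ x^q + x`) and `q² - q + 1` choices of `z`, because `v^{q²+q+1} = 1` makes `w` a
`(q²-q+1)`-th power. Roots of `X^{q+1} + X^q + 1` satisfy `v^{q³} = v`, so it has `q + 1` distinct
roots in `𝔽_{q⁶}`; each has `q² - 1` preimages `w`, and each such `w` has `q²` preimages `y`.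
The count is `(q+1)(q²-1) · q² · q(q²-q+1)`.

All fibre counts rest on one principle: a homomorphism from a group of order `k K` with at most
`k` elements in its kernel, mapping into a set of at most `K` elements, is onto that set with
fibres of size `k`. The two bounds come from counting roots of polynomials.
-/

open Finset Polynomial

theorem Finset.card_eq_mul_of_card_fiber {α β : Type*} [DecidableEq β] {s : Finset α}
    {t : Finset β} {f : α → β} {k : ℕ} (hf : ∀ a ∈ s, f a ∈ t)
    (hk : ∀ b ∈ t, #{a ∈ s | f a = b} = k) : #s = #t * k := by
  rw [card_eq_sum_card_fiberwise hf, sum_const_nat hk]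

theorem Finset.card_filter_mem_eq_mul {α β : Type*} [Fintype α] [DecidableEq β] (f : α → β)
    (t : Finset β) {k : ℕ} (hk : ∀ b ∈ t, #{a | f a = b} = k) :
    #{a | f a ∈ t} = #t * k := by
  refine card_eq_mul_of_card_fiber (fun a ha => (mem_filter.1 ha).2) fun b hb => ?_
  rw [filter_filter, ← hk b hb]
  congr 1
  ext a
  simp only [mem_filter, mem_univ, true_and, and_iff_right_iff_imp]
  rintro rfl
  exact hb

@[to_additive]
theorem MonoidHom.card_fiber_eq_card_ker {G H : Type*} [Group G] [Group H] [Fintype G]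
    [DecidableEq H] (f : G →* H) (x₀ : G) : #{x | f x = f x₀} = #{x | f x = 1} := by
  refine card_nbij' (x₀⁻¹ * ·) (x₀ * ·) ?_ ?_ ?_ ?_ <;> intro x hx <;> simp_all

@[to_additive]
theorem MonoidHom.card_fiber_eq_of_maps_to {G H : Type*} [Group G] [Group H] [Fintype G]
    [DecidableEq H] (f : G →* H) {t : Finset H} {k K : ℕ} (hft : ∀ x, f x ∈ t)
    (hker : #{x | f x = 1} ≤ k) (ht : #t ≤ K) (hG : Fintype.card G = k * K) {a : H}
    (ha : a ∈ t) : #{x | f x = a} = k := by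
  have hG' : Fintype.card G = #(univ.image f) * #{x | f x = 1} := by
    rw [← card_univ, card_eq_sum_card_fiberwise fun x _ => mem_image_of_mem f (mem_univ x),
      sum_const_nat]
    rintro _ hb
    obtain ⟨x₀, -, rfl⟩ := mem_image.1 hb
    exact f.card_fiber_eq_card_ker x₀
  have himage : univ.image f ⊆ t := fun b hb => by
    obtain ⟨x, -, rfl⟩ := mem_image.1 hb
    exact hft x
  have hpos : 0 < k * K := hG ▸ Fintype.card_pos
  have hk : 0 < k := Nat.pos_of_mul_pos_right hpos
  have hK : 0 < K := Nat.pos_of_mul_pos_left hpos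
  have hle := (card_le_card himage).trans ht
  have hker_eq : #{x | f x = 1} = k := le_antisymm hker (by nlinarith)
  have himage_eq : univ.image f = t := eq_of_subset_of_card_le himage (by nlinarith)
  obtain ⟨x₀, -, rfl⟩ := mem_image.1 (himage_eq ▸ ha)
  rw [f.card_fiber_eq_card_ker, hker_eq]

theorem FiniteField.card_filter_pow_eq {F : Type*} [Field F] [Fintype F] [DecidableEq F]
    {n n' : ℕ} (hn : n * n' = Fintype.card F - 1) {c : F} (hc : c ^ n' = 1) :
    #{z | z ^ n = c} = n := by
  have hunits : Fintype.card Fˣ = n * n' := by rw [Fintype.card_units, hn]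
  have hpos : 0 < n * n' := hunits ▸ Fintype.card_pos
  have hn0 : n ≠ 0 := (Nat.pos_of_mul_pos_right hpos).ne'
  have hn'0 : n' ≠ 0 := (Nat.pos_of_mul_pos_left hpos).ne'
  have hc0 : c ≠ 0 := by
    rintro rfl
    simp [zero_pow hn'0] at hc
  refine Eq.trans ?_ <| (powMonoidHom n : Fˣ →* Fˣ).card_fiber_eq_of_maps_to
    (t := {u | u ^ n' = 1}) (fun u => by simp [← pow_mul, ← hunits, pow_card_eq_one])
    (IsCyclic.card_pow_eq_one_le (Nat.pos_of_ne_zero hn0))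
    (IsCyclic.card_pow_eq_one_le (Nat.pos_of_ne_zero hn'0)) hunits
    (a := Units.mk0 c hc0) (by simp [Units.ext_iff, hc])
  symm
  refine card_bij (fun u _ => (u : F)) (fun u hu => ?_) (fun u _ v _ => Units.ext)
    fun z hz => ?_
  · simpa [Units.ext_iff] using hu
  · have hz0 : z ≠ 0 := by
      rintro rfl
      simp [zero_pow hn0, hc0.symm] at hz
    exact ⟨Units.mk0 z hz0, by simpa [Units.ext_iff] using hz, rfl⟩

theorem Polynomial.card_filter_eq_zero_le_of_eval {R : Type*} [CommRing R] [IsDomain R]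
    [Fintype R] [DecidableEq R] {p : R[X]} {n : ℕ} (hn : 0 < n) (hp : p.natDegree = n)
    {g : R → R} (hg : ∀ x, p.eval x = g x) : #{x | g x = 0} ≤ n :=
  hp ▸ card_le_degree_of_subset_roots fun x hx =>
    (mem_roots (ne_zero_of_natDegree_gt (hp ▸ hn))).2 ((hg x).trans (mem_filter.1 hx).2)

section Frobenius

variable {R : Type*} [CommRing R] {q : ℕ}

theorem add_pow_pow_of_add_pow (hadd : ∀ a b : R, (a + b) ^ q = a ^ q + b ^ q) (j : ℕ)
    (a b : R) : (a + b) ^ q ^ j = a ^ q ^ j + b ^ q ^ j := by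
  induction j with
  | zero => simp
  | succ j ih => rw [pow_succ, pow_mul, pow_mul, pow_mul, ih, hadd]

theorem sub_pow_pow_of_add_pow (hadd : ∀ a b : R, (a + b) ^ q = a ^ q + b ^ q) (j : ℕ)
    (a b : R) : (a - b) ^ q ^ j = a ^ q ^ j - b ^ q ^ j := by
  have h := add_pow_pow_of_add_pow hadd j (a - b) b
  rw [sub_add_cancel] at h
  rw [h, add_sub_cancel_right]

/-- Over `𝔽_{q⁶}` its zero set is the image of `x ↦ x^q + x`. -/
def altTrace (q : ℕ) (u : R) : R :=
  u ^ q ^ 5 - u ^ q ^ 4 + u ^ q ^ 3 - u ^ q ^ 2 + u ^ q - u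

theorem altTrace_pow_add_self (hadd : ∀ a b : R, (a + b) ^ q = a ^ q + b ^ q) {x : R}
    (hx : x ^ q ^ 6 = x) : altTrace q (x ^ q + x) = 0 := by
  have h := fun j => add_pow_pow_of_add_pow hadd j (x ^ q) x
  unfold altTrace
  linear_combination h 5 - h 4 + h 3 - h 2 + h 1 + hx

theorem pow_pow_four_add_pow_sq_add_self_eq_zero (hadd : ∀ a b : R, (a + b) ^ q = a ^ q + b ^ q)
    {y : R} (hy : y ^ q ^ 6 = y) :
    (y ^ q ^ 2 - y) ^ q ^ 4 + (y ^ q ^ 2 - y) ^ q ^ 2 + (y ^ q ^ 2 - y) = 0 := by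
  have h := fun j => sub_pow_pow_of_add_pow hadd j (y ^ q ^ 2) y
  linear_combination h 4 + h 2 + hy

theorem altTrace_pow_succ (hadd : ∀ a b : R, (a + b) ^ q = a ^ q + b ^ q) {y : R}
    (hy : y ^ q ^ 6 = y) :
    altTrace q (y ^ (q + 1)) = -((y ^ q ^ 2 - y) ^ (q ^ 3 + q ^ 2)
      + (y ^ q ^ 2 - y) ^ (q ^ 3 + 1) + (y ^ q ^ 2 - y) ^ (q + 1)) := by
  have h := fun j => sub_pow_pow_of_add_pow hadd j (y ^ q ^ 2) y
  have h1 : (y ^ q ^ 2 - y) ^ q = (y ^ q ^ 2) ^ q - y ^ q := by simpa using h 1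
  rw [pow_add (y ^ q ^ 2 - y) (q ^ 3), pow_add (y ^ q ^ 2 - y) (q ^ 3),
    pow_succ (y ^ q ^ 2 - y) q, pow_one, h 3, h 2, h1]
  unfold altTrace
  linear_combination y ^ q ^ 5 * hy

theorem pow_trinomial_eq_zero (hq : q ≠ 0) (hadd : ∀ a b : R, (a + b) ^ q = a ^ q + b ^ q)
    {v : R} (hv : v ^ (q + 1) + v ^ q + 1 = 0) : (v ^ q) ^ (q + 1) + (v ^ q) ^ q + 1 = 0 := by
  have h := congrArg (· ^ q) hv
  simp only [hadd, one_pow, zero_pow hq] at h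
  linear_combination h

theorem pow_sq_add_add_one_eq_one (hq : q ≠ 0) (hadd : ∀ a b : R, (a + b) ^ q = a ^ q + b ^ q)
    {v : R} (hv : v ^ (q + 1) + v ^ q + 1 = 0) : v ^ (q ^ 2 + q + 1) = 1 := by
  linear_combination v ^ q ^ 2 * hv - pow_trinomial_eq_zero hq hadd hv

theorem pow_pow_three_eq_self (hq : q ≠ 0) (hadd : ∀ a b : R, (a + b) ^ q = a ^ q + b ^ q)
    {v : R} (hv : v ^ (q + 1) + v ^ q + 1 = 0) : v ^ q ^ 3 = v := by
  have h := pow_sq_add_add_one_eq_one hq hadd (pow_trinomial_eq_zero hq hadd hv)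
  linear_combination v * h - v ^ q ^ 3 * pow_sq_add_add_one_eq_one hq hadd hv

theorem pow_sq_add_one_add_self_add_one_eq_zero (hq : q ≠ 0)
    (hadd : ∀ a b : R, (a + b) ^ q = a ^ q + b ^ q) {v : R} (hv : v ^ (q + 1) + v ^ q + 1 = 0) :
    v ^ (q ^ 2 + 1) + v + 1 = 0 := by
  linear_combination v ^ q ^ 2 * v * hv - (v + 1) * pow_sq_add_add_one_eq_one hq hadd hv

theorem pow_pow_four_add_pow_sq_add_one_eq_one (hq : q ≠ 0)
    (hadd : ∀ a b : R, (a + b) ^ q = a ^ q + b ^ q) {v : R} (hv : v ^ (q + 1) + v ^ q + 1 = 0) :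
    v ^ (q ^ 4 + q ^ 2 + 1) = 1 := by
  have h := congrArg (· ^ q) (pow_pow_three_eq_self hq hadd hv)
  linear_combination v ^ q ^ 2 * v * h + pow_sq_add_add_one_eq_one hq hadd hv

theorem pow_cube_add_sq_add_eq_mul {s : ℕ} (hs : q ^ 2 = s + 1) (w : R) :
    w ^ (q ^ 3 + q ^ 2) + w ^ (q ^ 3 + 1) + w ^ (q + 1)
      = w ^ (q + 1) * ((w ^ s) ^ (q + 1) + (w ^ s) ^ q + 1) := by
  rw [show q ^ 3 = q * q ^ 2 by ring, hs]
  ring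

theorem pow_pow_four_add_pow_sq_add_eq_mul {s : ℕ} (hs : q ^ 2 = s + 1) (w : R) :
    w ^ q ^ 4 + w ^ q ^ 2 + w = w * ((w ^ s) ^ (q ^ 2 + 1) + w ^ s + 1) := by
  rw [show q ^ 4 = q ^ 2 * q ^ 2 by ring, hs]
  ring

end Frobenius

def trinomialRoots (F : Type*) [Field F] [Fintype F] [DecidableEq F] (q : ℕ) : Finset F :=
  {v | v ^ (q + 1) + v ^ q + 1 = 0}

section GKCurve

variable {F : Type*} [Field F] [Fintype F] [DecidableEq F] {q : ℕ}

@[simp]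
theorem mem_trinomialRoots {v : F} : v ∈ trinomialRoots F q ↔ v ^ (q + 1) + v ^ q + 1 = 0 := by
  simp [trinomialRoots]

theorem card_filter_pow_add_self_eq (hq : 2 ≤ q) (hF : Fintype.card F = q ^ 6)
    (hadd : ∀ a b : F, (a + b) ^ q = a ^ q + b ^ q) {a : F} (ha : altTrace q a = 0) :
    #{x : F | x ^ q + x = a} = q := by
  have hker : #{x : F | x ^ q + x = 0} ≤ q := by
    have h1 : 1 < q := hq
    refine card_filter_eq_zero_le_of_eval (p := X ^ q + X) (by omega) ?_ fun x => by simp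
    compute_degree! <;> simp [h1.ne, h1.le]
  have htarget : #{u : F | altTrace q u = 0} ≤ q ^ 5 := by
    have h : ∀ i < 5, q ^ i < q ^ 5 := fun i hi => Nat.pow_lt_pow_right hq hi
    have h4 := h 4 (by norm_num)
    have h3 := h 3 (by norm_num)
    have h2 := h 2 (by norm_num)
    have h1 := h 1 (by norm_num)
    have h0 := h 0 (by norm_num)
    rw [pow_zero] at h0
    rw [pow_one] at h1
    refine card_filter_eq_zero_le_of_eval
      (p := X ^ q ^ 5 - X ^ q ^ 4 + X ^ q ^ 3 - X ^ q ^ 2 + X ^ q - X) (by positivity) ?_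
      fun x => by simp [altTrace]
    compute_degree! <;>
      simp [h4.ne', h3.ne', h2.ne', h1.ne', h0.ne, h4.le, h3.le, h2.le, h1.le, h0.le]
  have hf (a b : F) : (a + b) ^ q + (a + b) = a ^ q + a + (b ^ q + b) := by rw [hadd]; ring
  exact (AddMonoidHom.mk' (fun x : F => x ^ q + x) hf).card_fiber_eq_of_maps_to
    (t := {u | altTrace q u = 0})
    (fun x => by simpa using altTrace_pow_add_self hadd (hF ▸ FiniteField.pow_card x))
    (by simpa using hker) htarget (by rw [hF]; ring) (by simpa using ha)

theorem card_filter_pow_sq_sub_self_eq (hq : 2 ≤ q) (hF : Fintype.card F = q ^ 6)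
    (hadd : ∀ a b : F, (a + b) ^ q = a ^ q + b ^ q) {a : F}
    (ha : a ^ q ^ 4 + a ^ q ^ 2 + a = 0) : #{y : F | y ^ q ^ 2 - y = a} = q ^ 2 := by
  have h1 : 1 < q ^ 2 := Nat.one_lt_pow two_ne_zero hq
  have h2 : q ^ 2 < q ^ 4 := Nat.pow_lt_pow_right hq (by norm_num)
  have h0 : 1 < q ^ 4 := h1.trans h2
  have hker : #{y : F | y ^ q ^ 2 - y = 0} ≤ q ^ 2 := by
    refine card_filter_eq_zero_le_of_eval (p := X ^ q ^ 2 - X) (by positivity) ?_ fun y => by simp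
    compute_degree! <;> simp [h1.ne, h1.le]
  have htarget : #{u : F | u ^ q ^ 4 + u ^ q ^ 2 + u = 0} ≤ q ^ 4 := by
    refine card_filter_eq_zero_le_of_eval (p := X ^ q ^ 4 + X ^ q ^ 2 + X) (by positivity) ?_
      fun u => by simp
    compute_degree! <;> simp [h2.ne', h0.ne, h2.le, h0.le]
  have hf (a b : F) : (a + b) ^ q ^ 2 - (a + b) = a ^ q ^ 2 - a + (b ^ q ^ 2 - b) := by
    rw [add_pow_pow_of_add_pow hadd]; ring
  exact (AddMonoidHom.mk' (fun y : F => y ^ q ^ 2 - y) hf).card_fiber_eq_of_maps_to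
    (t := {u | u ^ q ^ 4 + u ^ q ^ 2 + u = 0})
    (fun y => by
      simpa using pow_pow_four_add_pow_sq_add_self_eq_zero hadd (hF ▸ FiniteField.pow_card y))
    (by simpa using hker) htarget (by rw [hF]; ring) (by simpa using ha)

theorem pow_sq_sub_one_mem_trinomialRoots_iff (hq : 2 ≤ q)
    (hadd : ∀ a b : F, (a + b) ^ q = a ^ q + b ^ q) {y : F} (hy : y ^ q ^ 6 = y) :
    (y ^ q ^ 2 - y) ^ (q ^ 2 - 1) ∈ trinomialRoots F q ↔
      y ^ q ^ 2 - y ≠ 0 ∧ altTrace q (y ^ (q + 1)) = 0 := by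
  have hq2 : 4 ≤ q ^ 2 := by nlinarith
  have hs : q ^ 2 = q ^ 2 - 1 + 1 := by omega
  rw [mem_trinomialRoots, altTrace_pow_succ hadd hy, pow_cube_add_sq_add_eq_mul hs, neg_eq_zero,
    mul_eq_zero, pow_eq_zero_iff q.succ_ne_zero]
  constructor
  · refine fun hv => ⟨fun hw => ?_, Or.inr hv⟩
    simp [hw, zero_pow (by omega : q ^ 2 - 1 ≠ 0), zero_pow (by omega : q ≠ 0)] at hv
  · rintro ⟨hw, h | h⟩
    exacts [absurd h hw, h]

theorem card_trinomialRoots {p m k : ℕ} [ExpChar F p] (hq : q = p ^ m)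
    (hF : Fintype.card F = (q ^ 3) ^ k) : #(trinomialRoots F q) = q + 1 := by
  have hq0 : q ≠ 0 := hq ▸ pow_ne_zero m (expChar_pos F p).ne'
  set P : F[X] := X ^ (q + 1) + X ^ q + 1 with hP
  have hPdeg : P.natDegree = q + 1 := by
    rw [hP]
    compute_degree!
  have hP0 : P ≠ 0 := ne_zero_of_natDegree_gt (hPdeg ▸ q.succ_pos : 0 < P.natDegree)
  have hdvd : P ∣ X ^ Fintype.card F - X := by
    have : ExpChar (AdjoinRoot P) p := expChar_of_injective_ringHom
      (AdjoinRoot.of.injective_of_degree_ne_zero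
        (by rw [degree_eq_natDegree hP0, hPdeg]; exact_mod_cast q.succ_ne_zero)) p
    have hroot : AdjoinRoot.root P ^ (q + 1) + AdjoinRoot.root P ^ q + 1 = 0 := by
      simpa [hP] using AdjoinRoot.mk_self (f := P)
    have hfix := pow_pow_three_eq_self hq0 (fun a b => hq ▸ add_pow_expChar_pow a b p m) hroot
    rw [← AdjoinRoot.mk_eq_zero, map_sub, map_pow, AdjoinRoot.mk_X, hF, sub_eq_zero]
    clear hF
    induction k with
    | zero => simp
    | succ k ih => rw [pow_succ, pow_mul, ih, hfix]
  have hQ : (X ^ Fintype.card F - X : F[X]).roots = univ.val :=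
    FiniteField.roots_X_pow_card_sub_X F
  have hQ0 : (X ^ Fintype.card F - X : F[X]) ≠ 0 :=
    FiniteField.X_pow_card_sub_X_ne_zero F Fintype.one_lt_card
  have hsplit : P.Splits := by
    refine Splits.of_dvd (splits_iff_card_roots.2 ?_) hQ0 hdvd
    rw [hQ, FiniteField.X_pow_card_sub_X_natDegree_eq F Fintype.one_lt_card]
    rfl
  have hnodup : P.roots.Nodup :=
    Multiset.nodup_of_le (roots.le_of_dvd hQ0 hdvd) (hQ ▸ univ.nodup)
  have hV : trinomialRoots F q = P.roots.toFinset := by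
    ext v
    rw [mem_trinomialRoots, Multiset.mem_toFinset, mem_roots hP0]
    simp [hP]
  rw [hV, Multiset.toFinset_card_of_nodup hnodup, splits_iff_card_roots.1 hsplit, hPdeg]

theorem card_filter_pow_sq_sub_one_mem_trinomialRoots (hq : 2 ≤ q)
    (hF : Fintype.card F = q ^ 6) (hadd : ∀ a b : F, (a + b) ^ q = a ^ q + b ^ q) :
    #{w : F | w ^ (q ^ 2 - 1) ∈ trinomialRoots F q} = #(trinomialRoots F q) * (q ^ 2 - 1) := by
  refine card_filter_mem_eq_mul _ _ fun v hv => FiniteField.card_filter_pow_eq ?_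
    (pow_pow_four_add_pow_sq_add_one_eq_one (by omega) hadd (mem_trinomialRoots.1 hv))
  have : 1 ≤ q ^ 2 := Nat.one_le_pow _ _ (by omega)
  rw [hF]
  zify [this, Nat.one_le_pow 6 q (by omega)]
  ring

theorem card_filter_sub_pow_mem_trinomialRoots (hq : 2 ≤ q) (hF : Fintype.card F = q ^ 6)
    (hadd : ∀ a b : F, (a + b) ^ q = a ^ q + b ^ q) :
    #{y : F | (y ^ q ^ 2 - y) ^ (q ^ 2 - 1) ∈ trinomialRoots F q}
      = #{w : F | w ^ (q ^ 2 - 1) ∈ trinomialRoots F q} * q ^ 2 := by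
  have hs : q ^ 2 = q ^ 2 - 1 + 1 := (Nat.sub_add_cancel (Nat.one_le_pow _ _ (by omega))).symm
  simpa using card_filter_mem_eq_mul (fun y : F => y ^ q ^ 2 - y)
    {w | w ^ (q ^ 2 - 1) ∈ trinomialRoots F q} fun w hw => by
      have hv := mem_trinomialRoots.1 (mem_filter.1 hw).2
      refine card_filter_pow_sq_sub_self_eq hq hF hadd ?_
      rw [pow_pow_four_add_pow_sq_add_eq_mul hs,
        pow_sq_add_one_add_self_add_one_eq_zero (by omega) hadd hv, mul_zero]

theorem card_gk_fiber {n : ℕ} (hn : n ≠ 0) {y : F} (hw : y ^ q ^ 2 - y ≠ 0) :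
    #{t ∈ ({t : F × F × F | t.2.2 ^ n = t.2.1 ^ q ^ 2 - t.2.1 ∧
        t.2.1 ^ (q + 1) = t.1 ^ q + t.1 ∧ t.2.2 ≠ 0} : Finset _) | t.2.1 = y}
      = #{x : F | x ^ q + x = y ^ (q + 1)} * #{z : F | z ^ n = y ^ q ^ 2 - y} := by
  rw [← card_product]
  refine card_nbij' (fun t => (t.1, t.2.2)) (fun xz => (xz.1, y, xz.2)) ?_ ?_ ?_ ?_
  · rintro ⟨x, y', z⟩ ht
    simp only [coe_filter, Set.mem_ofPred_eq, mem_filter, mem_univ, true_and] at ht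
    obtain ⟨⟨hz, hherm, -⟩, rfl⟩ := ht
    simpa using ⟨hherm.symm, hz⟩
  · rintro ⟨x, z⟩ hxz
    simp only [coe_product, coe_filter, Set.mem_prod, Set.mem_ofPred_eq, mem_univ, true_and]
      at hxz
    obtain ⟨hherm, hz⟩ := hxz
    refine mem_filter.2 ⟨mem_filter.2 ⟨mem_univ _, hz, hherm.symm, ?_⟩, rfl⟩
    rintro rfl
    exact hw (by rw [← hz, zero_pow hn])
  · rintro ⟨x, y', z⟩ ht
    simp only [coe_filter, Set.mem_ofPred_eq, mem_filter, mem_univ, true_and] at ht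
    rw [ht.2]
  · intro _ _
    rfl

theorem card_gk_points_z_ne_zero (hq : 2 ≤ q) (hF : Fintype.card F = q ^ 6)
    (hadd : ∀ a b : F, (a + b) ^ q = a ^ q + b ^ q) :
    #{t : F × F × F | t.2.2 ^ (q ^ 2 - q + 1) = t.2.1 ^ q ^ 2 - t.2.1 ∧
        t.2.1 ^ (q + 1) = t.1 ^ q + t.1 ∧ t.2.2 ≠ 0}
      = #{y : F | (y ^ q ^ 2 - y) ^ (q ^ 2 - 1) ∈ trinomialRoots F q}
        * (q * (q ^ 2 - q + 1)) := by
  have hpow (a : F) : a ^ q ^ 6 = a := hF ▸ FiniteField.pow_card a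
  have hn : (q ^ 2 - q + 1) * ((q ^ 2 - 1) * (q ^ 2 + q + 1)) = Fintype.card F - 1 := by
    have : q ≤ q ^ 2 := Nat.le_self_pow two_ne_zero q
    rw [hF]
    zify [this, (by omega : 1 ≤ q).trans this, Nat.one_le_pow 6 q (by omega)]
    ring
  refine card_eq_mul_of_card_fiber (f := fun t => t.2.1) (fun t ht => ?_) fun y hy => ?_
  · obtain ⟨hz, hherm, hz0⟩ := (mem_filter.1 ht).2
    rw [mem_filter, pow_sq_sub_one_mem_trinomialRoots_iff hq hadd (hpow _), hherm, ← hz]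
    exact ⟨mem_univ _, pow_ne_zero _ hz0, altTrace_pow_add_self hadd (hpow _)⟩
  · have hv := (mem_filter.1 hy).2
    obtain ⟨hw, htr⟩ := (pow_sq_sub_one_mem_trinomialRoots_iff hq hadd (hpow y)).1 hv
    have hc : (y ^ q ^ 2 - y) ^ ((q ^ 2 - 1) * (q ^ 2 + q + 1)) = 1 := by
      rw [pow_mul]
      exact pow_sq_add_add_one_eq_one (by omega) hadd (mem_trinomialRoots.1 hv)
    rw [card_gk_fiber (by omega) hw, card_filter_pow_add_self_eq hq hF hadd htr,
      FiniteField.card_filter_pow_eq hn hc]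

end GKCurve

theorem stmt_16 (q : ℕ) (hq : ∃ (p m : ℕ), p.Prime ∧ 0 < m ∧ q = p ^ m)
    (F : Type*) [Field F] [Fintype F] (hF : Fintype.card F = q ^ 6) :
    {p : F × F × F | p.2.2 ^ (q ^ 2 - q + 1) = p.2.1 ^ (q ^ 2) - p.2.1 ∧
        p.2.1 ^ (q + 1) = p.1 ^ q + p.1 ∧ p.2.2 ≠ 0}.ncard
      = q ^ 8 - q ^ 6 + q ^ 5 - q ^ 3 ∧
    q ^ 8 - q ^ 6 + q ^ 5 - q ^ 3 = q ^ 3 * (q ^ 2 - 1) * (q ^ 3 + 1) := by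
  classical
  obtain ⟨p, m, hp, hm, hqpm⟩ := hq
  have : Fact p.Prime := ⟨hp⟩
  have : CharP F p := charP_of_card_eq_prime_pow (hF.trans (by rw [hqpm, ← pow_mul]))
  have hq : 2 ≤ q := hqpm ▸ hp.two_le.trans (Nat.le_self_pow hm.ne' p)
  have hadd (a b : F) : (a + b) ^ q = a ^ q + b ^ q := hqpm ▸ add_pow_char_pow a b p m
  have h1 : 1 ≤ q ^ 2 := Nat.one_le_pow _ _ (by omega)
  have h2 : q ≤ q ^ 2 := Nat.le_self_pow two_ne_zero q
  have h3 : q ^ 3 ≤ q ^ 5 := Nat.pow_le_pow_right (by omega) (by norm_num)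
  have h4 : q ^ 6 ≤ q ^ 8 := Nat.pow_le_pow_right (by omega) (by norm_num)
  have h5 : q ^ 3 ≤ q ^ 8 - q ^ 6 + q ^ 5 := h3.trans (Nat.le_add_left _ _)
  refine ⟨?_, by zify [h1, h4, h5]; ring⟩
  rw [Set.ncard_eq_toFinset_card', Set.toFinset_ofPred, card_gk_points_z_ne_zero hq hF hadd,
    card_filter_sub_pow_mem_trinomialRoots hq hF hadd,
    card_filter_pow_sq_sub_one_mem_trinomialRoots hq hF hadd,
    card_trinomialRoots (k := 2) hqpm (by rw [hF]; ring)]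
  zify [h1, h2, h4, h5]
  ring
end
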